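/- arXiv:2003.02660 — 4 statements merged into one kernel-verified Lean document; each statement's English description precedes it below -/
import Mathlib

section
/- Let $K$ be an infinite field (or any field with at least $3$ elements suffices for small cases) and consider the Plücker relation: for any $A \subseteq [n]$ with $|A| = m-1$ and $B \subseteq [n]$ with $|B| = m+1$, and any $m \times n$ matrix $M$ over $K$, we have $\sum_{i \in B \setminus A} (-1)^{|[i]\cap A| + |[i]\cap B|} \det(M_{A \cup \{i\}}) \det(M_{B \setminus \{i\}}) = 0$, where $M_I$ denotes the $m \times m$ submatrix of $M$ with columns indexed by $I$ (in increasing order). -/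
/-!
Let `c r = (-1)^r det` of the columns `A` of `M` with row `r` deleted. Expanding the minor on
`A ∪ {i}` along column `i` gives `±⟨M_i, c⟩`, and `⟨M_i, c⟩ = 0` for `i ∈ A` (repeated
column). So the Plücker sum is, up to sign, `⟨∑_{i ∈ B} ± minor(B \ {i}) M_i, c⟩`, and that
vector vanishes: its `r`-th entry is the first-row Laplace expansion of the columns `B` of `M`
with row `r` put on top, a matrix with a repeated row.
-/

open Matrix Finset

/-- The maximal minor of an `m × n` matrix `M` on the column set `I` (columns taken in
increasing order); junk value `0` if `I` does not have exactly `m` elements. -/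
noncomputable def minor {K : Type*} [Field K] {m n : ℕ}
    (M : Matrix (Fin m) (Fin n) K) (I : Finset (Fin n)) : K :=
  if h : I.card = m then (M.submatrix id (fun k => (I.orderIsoOfFin h k : Fin n))).det
  else 0

namespace Finset

variable {α : Type*} [LinearOrder α]

lemma card_filter_lt_orderEmbOfFin (s : Finset α) {k : ℕ} (h : #s = k) (j : Fin k) :
    #(s.filter (· < s.orderEmbOfFin h j)) = j := by
  have hmap :
      s.filter (· < s.orderEmbOfFin h j) = (Iio j).map (s.orderEmbOfFin h).toEmbedding := by
    ext x
    constructor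
    · intro hx
      obtain ⟨hxs, hlt⟩ := mem_filter.1 hx
      obtain ⟨y, rfl⟩ : x ∈ Set.range (s.orderEmbOfFin h) := by simpa using hxs
      simpa using hlt
    · simp only [mem_map, mem_Iio, mem_filter]
      rintro ⟨y, hy, rfl⟩
      exact ⟨orderEmbOfFin_mem .., (s.orderEmbOfFin h).strictMono hy⟩
  rw [hmap, card_map, Fin.card_Iio]

lemma card_filter_le_of_mem {s : Finset α} {i : α} (hi : i ∈ s) :
    #(s.filter (· ≤ i)) = #(s.filter (· < i)) + 1 := by
  have hins : s.filter (· ≤ i) = insert i (s.filter (· < i)) := by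
    ext x
    simp only [mem_filter, mem_insert]
    grind
  rw [hins, card_insert_of_notMem (by simp)]

lemma filter_le_eq_filter_lt_of_notMem {s : Finset α} {i : α} (hi : i ∉ s) :
    s.filter (· ≤ i) = s.filter (· < i) :=
  filter_congr fun x _ => by grind

lemma orderEmbOfFin_comp_succAbove {s t : Finset α} {k : ℕ} (ht : #t = k + 1) (p : Fin (k + 1))
    (hs : t.erase (t.orderEmbOfFin ht p) = s) (h : #s = k) :
    t.orderEmbOfFin ht ∘ p.succAbove = s.orderEmbOfFin h := by
  subst hs
  refine orderEmbOfFin_unique h (fun x => mem_erase.2 ⟨?_, orderEmbOfFin_mem ..⟩)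
    ((t.orderEmbOfFin ht).strictMono.comp (Fin.strictMono_succAbove p))
  exact fun he => Fin.succAbove_ne p x ((t.orderEmbOfFin ht).injective he)

lemma orderEmbOfFin_insert {s : Finset α} {k : ℕ} (h : #s = k) {i : α} (hi : i ∉ s)
    (h' : #(insert i s) = k + 1) :
    ∃ p : Fin (k + 1), (p : ℕ) = #(s.filter (· < i)) ∧
      ⇑((insert i s).orderEmbOfFin h') = Fin.insertNth p i (s.orderEmbOfFin h) := by
  obtain ⟨p, hp⟩ : i ∈ Set.range ((insert i s).orderEmbOfFin h') := by simp
  refine ⟨p, ?_, ?_⟩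
  · rw [← card_filter_lt_orderEmbOfFin _ h' p, hp, filter_insert, if_neg (lt_irrefl i)]
  · rw [← Fin.insertNth_self_removeNth p ((insert i s).orderEmbOfFin h'), hp]
    congr 1
    exact orderEmbOfFin_comp_succAbove h' p (by rw [hp, erase_insert hi]) h

end Finset

namespace Matrix

variable {K : Type*} [CommRing K] {k n : ℕ}

/-- `v ⬝ᵥ cofactorVec M e` is the determinant of the square matrix with columns
`v, M_{e 0}, …, M_{e (k-1)}`, expanded along its first column. -/
def cofactorVec (M : Matrix (Fin (k + 1)) (Fin n) K) (e : Fin k → Fin n) : Fin (k + 1) → K :=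
  fun r => (-1) ^ (r : ℕ) * det (M.submatrix r.succAbove e)

lemma det_submatrix_insertNth (M : Matrix (Fin (k + 1)) (Fin n) K) (e : Fin k → Fin n)
    (p : Fin (k + 1)) (i : Fin n) :
    det (M.submatrix id (p.insertNth i e)) =
      (-1) ^ (p : ℕ) * (Mᵀ i ⬝ᵥ cofactorVec M e) := by
  rw [det_succ_column _ p, dotProduct, mul_sum]
  refine sum_congr rfl fun r _ => ?_
  simp only [cofactorVec, submatrix_apply, id, Fin.insertNth_apply_same, submatrix_submatrix,
    Fin.insertNth_comp_succAbove, Function.id_comp, transpose_apply, pow_add]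
  ring_nf

lemma col_dotProduct_cofactorVec_eq_zero_of_mem_range (M : Matrix (Fin (k + 1)) (Fin n) K)
    {e : Fin k → Fin n} {i : Fin n} (hi : i ∈ Set.range e) :
    Mᵀ i ⬝ᵥ cofactorVec M e = 0 := by
  obtain ⟨y, rfl⟩ := hi
  have hdet := det_submatrix_insertNth M e 0 (e y)
  rw [det_zero_of_column_eq (Fin.succ_ne_zero y).symm (fun r => by simp)] at hdet
  simpa using hdet.symm

lemma sum_det_smul_col_eq_zero (M : Matrix (Fin (k + 1)) (Fin n) K) (e : Fin (k + 2) → Fin n) :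
    ∑ j : Fin (k + 2), ((-1) ^ (j : ℕ) * det (M.submatrix id (e ∘ j.succAbove))) • Mᵀ (e j) =
      0 := by
  ext r
  have hdet : det (M.submatrix (Fin.cons r id) e) = 0 :=
    det_zero_of_row_eq (Fin.succ_ne_zero r).symm rfl
  rw [det_succ_row_zero] at hdet
  simpa [mul_comm, mul_assoc, submatrix_submatrix] using hdet

end Matrix

section Minor

variable {K : Type*} [Field K] {k n : ℕ}

lemma minor_eq_det {m : ℕ} (M : Matrix (Fin m) (Fin n) K) {s : Finset (Fin n)} (h : #s = m) :
    minor M s = det (M.submatrix id (s.orderEmbOfFin h)) := by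
  rw [minor, dif_pos h]
  rfl

lemma minor_insert (M : Matrix (Fin (k + 1)) (Fin n) K) {A : Finset (Fin n)} (hA : #A = k)
    {i : Fin n} (hi : i ∉ A) :
    minor M (insert i A) =
      (-1) ^ #(A.filter (· < i)) * (Mᵀ i ⬝ᵥ cofactorVec M (A.orderEmbOfFin hA)) := by
  have hcard : #(insert i A) = k + 1 := by rw [card_insert_of_notMem hi, hA]
  obtain ⟨p, hp, he⟩ := orderEmbOfFin_insert hA hi hcard
  rw [minor_eq_det M hcard, he, det_submatrix_insertNth, hp]

lemma sum_minor_erase_smul_col_eq_zero (M : Matrix (Fin (k + 1)) (Fin n) K) {B : Finset (Fin n)}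
    (hB : #B = k + 2) :
    ∑ i ∈ B, ((-1) ^ #(B.filter (· < i)) * minor M (B.erase i)) • Mᵀ i = 0 := by
  set e := B.orderEmbOfFin hB
  have hminor (j : Fin (k + 2)) :
      minor M (B.erase (e j)) = det (M.submatrix id (e ∘ j.succAbove)) := by
    have hcard : #(B.erase (e j)) = k + 1 := by
      rw [card_erase_of_mem (orderEmbOfFin_mem ..), hB]
      rfl
    rw [minor_eq_det M hcard, orderEmbOfFin_comp_succAbove hB j rfl hcard]
  have hreindex := sum_map univ e.toEmbedding
    fun i => ((-1 : K) ^ #(B.filter (· < i)) * minor M (B.erase i)) • Mᵀ i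
  rw [map_orderEmbOfFin_univ] at hreindex
  rw [hreindex]
  simp only [RelEmbedding.coe_toEmbedding, e, card_filter_lt_orderEmbOfFin, hminor]
  exact sum_det_smul_col_eq_zero M e

end Minor

theorem plucker_relation_general
    (K : Type*) [Field K] (m n : ℕ)
    (M : Matrix (Fin m) (Fin n) K)
    (A B : Finset (Fin n)) (hA : A.card + 1 = m) (hB : B.card = m + 1) :
    ∑ i ∈ B \ A, (-1 : K) ^ ((A.filter (· ≤ i)).card + (B.filter (· ≤ i)).card) *
      minor M (insert i A) * minor M (B.erase i) = 0 := by
  subst hA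
  set c := cofactorVec M (A.orderEmbOfFin rfl) with hc
  set w : Fin n → K := fun i => (-1) ^ #(B.filter (· < i)) * minor M (B.erase i)
  have hterm : ∀ i ∈ B \ A, (-1 : K) ^ ((A.filter (· ≤ i)).card + (B.filter (· ≤ i)).card) *
      minor M (insert i A) * minor M (B.erase i) = -(w i * (Mᵀ i ⬝ᵥ c)) := by
    intro i hi
    obtain ⟨hiB, hiA⟩ := mem_sdiff.1 hi
    rw [filter_le_eq_filter_lt_of_notMem hiA, card_filter_le_of_mem hiB, minor_insert M rfl hiA,
      ← hc, pow_add, pow_succ]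
    have hsq : (-1 : K) ^ #(A.filter (· < i)) * (-1) ^ #(A.filter (· < i)) = 1 := by
      rw [← mul_pow, neg_one_mul, neg_neg, one_pow]
    linear_combination (-w i * (Mᵀ i ⬝ᵥ c)) * hsq
  have hvanish : ∀ i ∈ B, i ∉ B \ A → w i * (Mᵀ i ⬝ᵥ c) = 0 := fun i hiB hi => by
    rw [col_dotProduct_cofactorVec_eq_zero_of_mem_range M (by simpa [hiB] using hi),
      mul_zero]
  calc _ = -∑ i ∈ B \ A, w i * (Mᵀ i ⬝ᵥ c) := by
        rw [← sum_neg_distrib]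
        exact sum_congr rfl hterm
    _ = -((∑ i ∈ B, w i • Mᵀ i) ⬝ᵥ c) := by
        rw [sum_subset sdiff_subset hvanish, sum_dotProduct]
        simp only [smul_dotProduct, smul_eq_mul]
    _ = 0 := by
        rw [show ∑ i ∈ B, w i • Mᵀ i = 0 from sum_minor_erase_smul_col_eq_zero M hB,
          zero_dotProduct, neg_zero]

/-- the classical quadratic Plücker relation among the maximal minors
of a matrix.  Here `[i] ∩ A` is the set of elements of `A` that are `≤ i`. -/
theorem plucker_relation
    (K : Type*) [Field K] [Infinite K] (m n : ℕ) (hm : m ≤ n)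
    (M : Matrix (Fin m) (Fin n) K)
    (A B : Finset (Fin n)) (hA : A.card + 1 = m) (hB : B.card = m + 1) :
    ∑ i ∈ B \ A, (-1 : K) ^ ((A.filter (· ≤ i)).card + (B.filter (· ≤ i)).card) *
      minor M (insert i A) * minor M (B.erase i) = 0 :=
  plucker_relation_general K m n M A B hA hB
end

section
/- Let $K$ be a field, $d \le e \le n$, let $W \in K^{e \times n}$ have rank $e$ with rowspace $X$, and let $L \subseteq X$ be a $d$-dimensional subspace given as the rowspace of a $d \times n$ matrix $M$ each of whose rows is in the rowspace of $W$. Then for every $A \subseteq [n]$ with $|A| = d-1$ and every $B \subseteq [n]$ with $|B| = e+1$, the incidence relation holds: $\sum_{i \in B \setminus A} (-1)^{|[i]\cap A| + |[i]\cap B|} \det(M_{A \cup \{i\}}) \det(W_{B \setminus \{i\}}) = 0$, where $M_I$ (resp. $W_J$) denotes the submatrix of $M$ (resp. $W$) with columns indexed by $I$ (resp. $J$). -/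
open Matrix Finset

lemma filter_lt_card {n m : ℕ} (s : Finset (Fin n)) (h : s.card = m) (c : Fin m) :
    (s.filter (· < s.orderEmbOfFin h c)).card = c := by
  have himg : s.filter (· < s.orderEmbOfFin h c)
      = (Finset.Iio c).image (s.orderEmbOfFin h) := by
    ext x
    simp only [Finset.mem_filter, Finset.mem_image, Finset.mem_Iio]
    constructor
    · rintro ⟨hx, hlt⟩
      have hx' : x ∈ Set.range (s.orderEmbOfFin h) := by
        rw [Finset.range_orderEmbOfFin]; exact hx
      obtain ⟨j, rfl⟩ := hx'
      exact ⟨j, (s.orderEmbOfFin h).lt_iff_lt.mp hlt, rfl⟩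
    · rintro ⟨j, hj, rfl⟩
      exact ⟨Finset.orderEmbOfFin_mem s h j, (s.orderEmbOfFin h).strictMono hj⟩
  rw [himg, Finset.card_image_of_injective _ (s.orderEmbOfFin h).injective, Fin.card_Iio]

lemma filter_le_card {n m : ℕ} (s : Finset (Fin n)) (h : s.card = m) (c : Fin m) :
    (s.filter (· ≤ s.orderEmbOfFin h c)).card = c + 1 := by
  have himg : s.filter (· ≤ s.orderEmbOfFin h c)
      = (Finset.Iic c).image (s.orderEmbOfFin h) := by
    ext x
    simp only [Finset.mem_filter, Finset.mem_image, Finset.mem_Iic]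
    constructor
    · rintro ⟨hx, hle⟩
      have hx' : x ∈ Set.range (s.orderEmbOfFin h) := by
        rw [Finset.range_orderEmbOfFin]; exact hx
      obtain ⟨j, rfl⟩ := hx'
      exact ⟨j, (s.orderEmbOfFin h).le_iff_le.mp hle, rfl⟩
    · rintro ⟨j, hj, rfl⟩
      exact ⟨Finset.orderEmbOfFin_mem s h j, (s.orderEmbOfFin h).monotone hj⟩
  rw [himg, Finset.card_image_of_injective _ (s.orderEmbOfFin h).injective, Fin.card_Iic]

lemma key_relation {K : Type*} [Field K] {e n : ℕ} (W : Matrix (Fin e) (Fin n) K)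
    (B : Finset (Fin n)) (hB : B.card = e + 1) (v : Fin n → K)
    (hv : v ∈ Submodule.span K (Set.range W)) :
    ∑ i ∈ B, (-1 : K) ^ ((B.filter (· ≤ i)).card) * minor W (B.erase i) * v i = 0 := by
  obtain ⟨c, rfl⟩ := (Submodule.mem_span_range_iff_exists_fun K).mp hv
  -- reduce to single rows of W
  have hrow : ∀ k : Fin e,
      ∑ i ∈ B, (-1 : K) ^ ((B.filter (· ≤ i)).card) * minor W (B.erase i) * W k i = 0 := by
    intro k
    set β : Fin (e + 1) ↪o Fin n := B.orderEmbOfFin hB with hβ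
    -- the (e+1)×(e+1) matrix with row 0 = row k of W (on columns B) repeated
    set N : Matrix (Fin (e + 1)) (Fin (e + 1)) K :=
      Matrix.of (Fin.cons (fun j => W k (β j)) (fun r j => W r (β j))) with hN
    have hdet : N.det = 0 := by
      apply Matrix.det_zero_of_row_eq (i := 0) (j := k.succ) (Fin.succ_ne_zero k).symm
      funext j
      simp [hN, Fin.cons_zero, Fin.cons_succ]
    rw [Matrix.det_succ_row_zero] at hdet
    -- identify the minors
    have hminor : ∀ j : Fin (e + 1),
        minor W (B.erase (β j)) = (N.submatrix Fin.succ j.succAbove).det := by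
      intro j
      have hmem : (β j : Fin n) ∈ B := Finset.orderEmbOfFin_mem B hB j
      have hcard : (B.erase (β j)).card = e := by
        rw [Finset.card_erase_of_mem hmem, hB]; omega
      have huniq : (fun cc : Fin e => (β (j.succAbove cc) : Fin n))
          = (B.erase (β j)).orderEmbOfFin hcard := by
        apply Finset.orderEmbOfFin_unique hcard
        · intro x
          refine Finset.mem_erase.mpr ⟨?_, Finset.orderEmbOfFin_mem B hB _⟩
          exact fun hcontra => Fin.succAbove_ne j x (β.injective hcontra)
        · exact β.strictMono.comp (Fin.strictMono_succAbove j)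
      rw [minor, dif_pos hcard]
      congr 1
      ext r cc
      simp only [Matrix.submatrix_apply, id_eq, Finset.coe_orderIsoOfFin_apply]
      rw [← huniq]
      simp [hN, Fin.cons_succ]
    -- reindex the sum over B by Fin (e+1)
    have hreindex : ∑ i ∈ B, (-1 : K) ^ ((B.filter (· ≤ i)).card) * minor W (B.erase i) * W k i
        = ∑ j : Fin (e + 1),
            (-1 : K) ^ ((B.filter (· ≤ (β j : Fin n))).card) * minor W (B.erase (β j)) * W k (β j) := by
      rw [← Finset.sum_coe_sort B]
      exact (Equiv.sum_comp (B.orderIsoOfFin hB).toEquiv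
        (fun x : B => (-1 : K) ^ ((B.filter (· ≤ (x : Fin n))).card)
          * minor W (B.erase x) * W k x)).symm
    rw [hreindex]
    calc ∑ j : Fin (e + 1),
            (-1 : K) ^ ((B.filter (· ≤ (β j : Fin n))).card) * minor W (B.erase (β j)) * W k (β j)
        = -∑ j : Fin (e + 1), (-1 : K) ^ (j : ℕ) * N 0 j * (N.submatrix Fin.succ j.succAbove).det := by
          rw [← Finset.sum_neg_distrib]
          refine Finset.sum_congr rfl fun j _ => ?_
          rw [filter_le_card B hB j, hminor j, pow_succ]
          have : N 0 j = W k (β j) := by simp [hN]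
          rw [this]; ring
      _ = 0 := by rw [hdet, neg_zero]
  calc ∑ i ∈ B, (-1 : K) ^ ((B.filter (· ≤ i)).card) * minor W (B.erase i) * (∑ kk, c kk • W kk) i
      = ∑ i ∈ B, ∑ kk, c kk *
          ((-1 : K) ^ ((B.filter (· ≤ i)).card) * minor W (B.erase i) * W kk i) := by
        refine Finset.sum_congr rfl fun i _ => ?_
        simp only [Finset.sum_apply, Pi.smul_apply, smul_eq_mul, Finset.mul_sum]
        exact Finset.sum_congr rfl fun kk _ => by ring
    _ = ∑ kk, c kk * ∑ i ∈ B,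
          (-1 : K) ^ ((B.filter (· ≤ i)).card) * minor W (B.erase i) * W kk i := by
        rw [Finset.sum_comm]
        exact Finset.sum_congr rfl fun kk _ => by rw [Finset.mul_sum]
    _ = 0 := by simp [hrow]

/-- if the rowspace of `M` (a `d`-dimensional subspace `L`) is contained in
the rowspace of `W` (an `e`-dimensional subspace `X`), then all the incidence relations
between the Plücker coordinates of `M` and `W` vanish. -/
theorem incidence_relations_vanish
    (K : Type*) [Field K] (d e n : ℕ) (hde : d ≤ e) (hen : e ≤ n)
    (W : Matrix (Fin e) (Fin n) K) (hW : W.rank = e)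
    (M : Matrix (Fin d) (Fin n) K) (hM : M.rank = d)
    (hsub : ∀ r : Fin d, M r ∈ Submodule.span K (Set.range W))
    (A B : Finset (Fin n)) (hA : A.card + 1 = d) (hB : B.card = e + 1) :
    ∑ i ∈ B \ A, (-1 : K) ^ ((A.filter (· ≤ i)).card + (B.filter (· ≤ i)).card) *
      minor M (insert i A) * minor W (B.erase i) = 0 := by
  clear hde hen hW hM
  subst hA
  set α : Fin A.card ↪o Fin n := A.orderEmbOfFin rfl with hα
  set Cmat : Matrix (Fin (A.card + 1)) (Fin (A.card + 1)) K :=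
    Matrix.of (fun r => Fin.cons 0 fun cc => M r (α cc)) with hC
  set F : (Fin (A.card + 1) → K) →ₗ[K] K :=
    { toFun := fun v => (Cmat.updateCol 0 v).det
      map_add' := fun u v => Matrix.det_updateCol_add Cmat 0 u v
      map_smul' := fun s v => Matrix.det_updateCol_smul Cmat 0 s v } with hF
  have hFapp : ∀ v : Fin (A.card + 1) → K, F v = (Cmat.updateCol 0 v).det := fun _ => rfl
  have hCval : ∀ (v : Fin (A.card + 1) → K) (r : Fin (A.card + 1)) (cc : Fin A.card),
      (Cmat.updateCol 0 v) r cc.succ = M r (α cc) := by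
    intro v r cc
    rw [Matrix.updateCol_apply, if_neg (Fin.succ_ne_zero cc)]
    simp [hC]
  have hCval0 : ∀ (v : Fin (A.card + 1) → K) (r : Fin (A.card + 1)),
      (Cmat.updateCol 0 v) r 0 = v r := by
    intro v r
    rw [Matrix.updateCol_apply, if_pos rfl]
  -- F vanishes on columns of M indexed by A
  have hFzero : ∀ i ∈ A, F (fun r => M r i) = 0 := by
    intro i hi
    obtain ⟨cc, hcc⟩ : ∃ cc, (α cc : Fin n) = i := by
      have hri : i ∈ Set.range (A.orderEmbOfFin rfl) := by
        rw [Finset.range_orderEmbOfFin]; exact hi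
      exact hri
    rw [hFapp]
    apply Matrix.det_zero_of_column_eq (i := (0 : Fin (A.card + 1))) (j := cc.succ)
      (Fin.succ_ne_zero cc).symm
    intro r
    rw [hCval, hCval0, hcc]
  -- the key minor computation for i ∉ A
  have hFminor : ∀ i, i ∉ A → minor M (insert i A)
      = (-1 : K) ^ ((A.filter (· < i)).card) * F (fun r => M r i) := by
    intro i hiA
    set p : ℕ := (A.filter (· < i)).card with hp
    have hpA : p ≤ A.card := Finset.card_le_card (Finset.filter_subset _ _)
    set pF : Fin (A.card + 1) := ⟨p, Nat.lt_succ_of_le hpA⟩ with hpF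
    set g : Fin (A.card + 1) → Fin n := Fin.cons i (fun cc => α cc) with hg
    have hgsucc : ∀ (z : Fin (A.card + 1)) (hz : z ≠ 0), g z = α (z.pred hz) := by
      intro z hz
      have h1 := (Fin.cons_succ (α := fun _ => Fin n) i (fun cc => (α cc : Fin n)) (z.pred hz))
      rw [Fin.succ_pred] at h1
      exact h1
    have hmemA : ∀ cc : Fin A.card, (α cc : Fin n) ∈ A := fun cc =>
      Finset.orderEmbOfFin_mem A rfl cc
    have hne : ∀ cc : Fin A.card, i ≠ (α cc : Fin n) :=
      fun cc heq => hiA (heq ▸ hmemA cc)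
    -- the crucial position fact
    have star : ∀ cc : Fin A.card, ((α cc : Fin n) < i ↔ (cc : ℕ) < p) := by
      intro cc
      constructor
      · intro hlt
        have hsubs : (Finset.Iic cc).image (fun j => (α j : Fin n)) ⊆ A.filter (· < i) := by
          intro x hx
          simp only [Finset.mem_image, Finset.mem_Iic] at hx
          obtain ⟨j, hj, rfl⟩ := hx
          exact Finset.mem_filter.mpr ⟨hmemA j, lt_of_le_of_lt (α.monotone hj) hlt⟩
        have hcard := Finset.card_le_card hsubs
        rw [Finset.card_image_of_injective _ α.injective, Fin.card_Iic] at hcard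
        omega
      · intro hlt
        by_contra hcon
        have hilt : i < α cc := lt_of_le_of_ne (not_lt.mp hcon) (hne cc)
        have hsubs : A.filter (· < i) ⊆ A.filter (· < (α cc : Fin n)) := by
          intro x hx
          rw [Finset.mem_filter] at hx ⊢
          exact ⟨hx.1, lt_trans hx.2 hilt⟩
        have hcard := Finset.card_le_card hsubs
        rw [filter_lt_card A rfl cc] at hcard
        omega
    have hstar' : ∀ cc : Fin A.card, (p ≤ (cc : ℕ)) → i < α cc := by
      intro cc hcc
      have h1 : ¬ ((α cc : Fin n) < i) := fun h => by
        have := (star cc).mp h; omega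
      exact lt_of_le_of_ne (not_lt.mp h1) (hne cc)
    -- the explicit enumeration of insert i A
    set f : Fin (A.card + 1) → Fin n := fun j => g (pF.cycleRange j) with hf
    -- values of f
    have hflt : ∀ j : Fin (A.card + 1), (hj : j < pF) →
        ∃ (cc : Fin A.card), (cc : ℕ) = (j : ℕ) ∧ f j = α cc := by
      intro j hj
      have h1 : pF.cycleRange j = j + 1 := Fin.cycleRange_of_lt hj
      have h2 : ((j + 1 : Fin (A.card + 1)) : ℕ) = (j : ℕ) + 1 := by
        rw [← Fin.cycleRange_of_lt hj]; exact Fin.coe_cycleRange_of_lt hj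
      have h3 : (j + 1 : Fin (A.card + 1)) ≠ 0 := by
        intro hcontra; rw [hcontra] at h2; simp at h2
      refine ⟨(j + 1 : Fin (A.card + 1)).pred h3, ?_, ?_⟩
      · rw [Fin.coe_pred, h2]; omega
      · show g (pF.cycleRange j) = _
        rw [h1]; exact hgsucc _ h3
    have hfeq : f pF = i := by
      show g (pF.cycleRange pF) = i
      rw [Fin.cycleRange_self]
      exact Fin.cons_zero _ _
    have hfgt : ∀ j : Fin (A.card + 1), (hj : pF < j) →
        ∃ (cc : Fin A.card), ((cc : ℕ) + 1 = (j : ℕ) ∧ f j = α cc) := by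
      intro j hj
      have h1 : pF.cycleRange j = j := Fin.cycleRange_of_gt hj
      have h3 : j ≠ 0 := by
        intro hcontra
        rw [hcontra] at hj
        exact absurd hj (by simp [Fin.lt_def])
      refine ⟨j.pred h3, ?_, ?_⟩
      · rw [Fin.coe_pred]
        have : (j : ℕ) ≠ 0 := fun hc => h3 (Fin.ext hc)
        omega
      · show g (pF.cycleRange j) = _
        rw [h1]; exact hgsucc _ h3
    have hmono : StrictMono f := by
      intro x y hxy
      rcases lt_trichotomy y pF with hy | hy | hy
      · have hx : x < pF := lt_trans hxy hy
        obtain ⟨cx, hcx, hfx⟩ := hflt x hx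
        obtain ⟨cy, hcy, hfy⟩ := hflt y hy
        rw [hfx, hfy]
        exact α.strictMono (by rw [Fin.lt_def, hcx, hcy]; exact hxy)
      · subst hy
        obtain ⟨cx, hcx, hfx⟩ := hflt x hxy
        rw [hfx, hfeq]
        exact (star cx).mpr (by rw [hcx]; exact hxy)
      · rcases lt_trichotomy x pF with hx | hx | hx
        · obtain ⟨cx, hcx, hfx⟩ := hflt x hx
          obtain ⟨cy, hcy, hfy⟩ := hfgt y hy
          rw [hfx, hfy]
          apply α.strictMono
          rw [Fin.lt_def, hcx]
          have h1 : (x : ℕ) < p := hx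
          have h2 : p < (y : ℕ) := hy
          omega
        · subst hx
          obtain ⟨cy, hcy, hfy⟩ := hfgt y hy
          rw [hfeq, hfy]
          apply hstar'
          have h2 : p < (y : ℕ) := hy
          omega
        · obtain ⟨cx, hcx, hfx⟩ := hfgt x hx
          obtain ⟨cy, hcy, hfy⟩ := hfgt y hy
          rw [hfx, hfy]
          apply α.strictMono
          rw [Fin.lt_def]
          have : (x : ℕ) < (y : ℕ) := hxy
          omega
    have hmem : ∀ j, f j ∈ insert i A := by
      intro j
      show g (pF.cycleRange j) ∈ insert i A
      rcases eq_or_ne (pF.cycleRange j) 0 with h0 | h0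
      · rw [h0]
        exact Finset.mem_insert_self i A
      · rw [hgsucc (pF.cycleRange j) h0]
        exact Finset.mem_insert_of_mem (hmemA _)
    have hins : (insert i A).card = A.card + 1 := Finset.card_insert_of_notMem hiA
    have huniq : f = (insert i A).orderEmbOfFin hins :=
      Finset.orderEmbOfFin_unique hins hmem hmono
    -- compute the minor
    rw [minor, dif_pos hins]
    have hsubm : (M.submatrix id fun k => (((insert i A).orderIsoOfFin hins k : Fin n)))
        = (M.submatrix id g).submatrix id (pF.cycleRange) := by
      ext r cc
      simp only [Matrix.submatrix_apply, id_eq]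
      rw [Finset.coe_orderIsoOfFin_apply, ← huniq]
    rw [hsubm, Matrix.det_permute', Fin.sign_cycleRange]
    have hgF : (M.submatrix id g).det = F (fun r => M r i) := by
      rw [hFapp]
      congr 1
      ext r cc
      refine Fin.cases ?_ ?_ cc
      · rw [hCval0]
        show M r (g 0) = M r i
        congr 1
      · intro cc'
        rw [hCval]
        show M r (g cc'.succ) = M r (α cc')
        rw [hgsucc _ (Fin.succ_ne_zero cc'), Fin.pred_succ]
    rw [hgF]
    norm_num [hpF]
  -- now assemble
  have hstep1 : ∀ i ∈ B \ A,
      (-1 : K) ^ ((A.filter (· ≤ i)).card + (B.filter (· ≤ i)).card) *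
        minor M (insert i A) * minor W (B.erase i)
      = ((-1 : K) ^ ((B.filter (· ≤ i)).card) * minor W (B.erase i)) • F (fun r => M r i) := by
    intro i hi
    have hiA : i ∉ A := (Finset.mem_sdiff.mp hi).2
    have hfil : A.filter (· ≤ i) = A.filter (· < i) := by
      apply Finset.filter_congr
      intro x hx
      constructor
      · intro h; exact lt_of_le_of_ne h (fun heq => hiA (heq ▸ hx))
      · exact le_of_lt
    rw [hFminor i hiA, hfil, smul_eq_mul]
    set q : ℕ := (A.filter (· < i)).card
    rw [pow_add]
    have hsq : (-1 : K) ^ q * (-1 : K) ^ q = 1 := by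
      rw [← pow_add]
      exact Even.neg_one_pow ⟨q, rfl⟩
    calc (-1 : K) ^ q * (-1 : K) ^ (B.filter (· ≤ i)).card *
          ((-1 : K) ^ q * F fun r => M r i) * minor W (B.erase i)
        = ((-1 : K) ^ q * (-1 : K) ^ q) * ((-1 : K) ^ (B.filter (· ≤ i)).card *
            minor W (B.erase i) * F (fun r => M r i)) := by ring
      _ = (-1 : K) ^ (B.filter (· ≤ i)).card * minor W (B.erase i) * F (fun r => M r i) := by
          rw [hsq, one_mul]
  rw [Finset.sum_congr rfl hstep1]
  rw [Finset.sum_subset (Finset.sdiff_subset (s := B) (t := A))]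
  · have hswap : ∀ i ∈ B, ((-1 : K) ^ ((B.filter (· ≤ i)).card) * minor W (B.erase i)) •
        F (fun r => M r i)
        = F (((-1 : K) ^ ((B.filter (· ≤ i)).card) * minor W (B.erase i)) • fun r => M r i) :=
      fun i _ => (_root_.map_smul F _ _).symm
    rw [Finset.sum_congr rfl hswap, ← map_sum]
    have hzero : (∑ i ∈ B, ((-1 : K) ^ ((B.filter (· ≤ i)).card) * minor W (B.erase i)) •
        (fun r => M r i)) = 0 := by
      funext r
      simp only [Finset.sum_apply, Pi.smul_apply, smul_eq_mul, Pi.zero_apply]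
      rw [← key_relation W B hB (M r) (hsub r)]
    rw [hzero]
    exact map_zero F
  · intro x hxB hxnBA
    have hxA : x ∈ A := by
      by_contra hxA
      exact hxnBA (Finset.mem_sdiff.mpr ⟨hxB, hxA⟩)
    rw [hFzero x hxA, smul_zero]
end

section
/- Let $M$ be the uniform matroid $U_{n,n}$ (the free matroid on $[n]$) and let $1 \le k \le n$. Then the rank-$k$ flats of $U_{n,n}$ are exactly the $k$-element subsets of $[n]$, and the $k$-th Dilworth truncation $\Dil_k(U_{n,n})$ is the matroid on ground set $\binom{[n]}{k}$ whose independent sets are the families $\{J_1, \dots, J_m\}$ of $k$-subsets such that for every nonempty subfamily $\{J_{l_1},\dots,J_{l_s}\}$, we have $|J_{l_1} \cup \cdots \cup J_{l_s}| \ge s + k - 1$. This collection of independent sets indeed forms a matroid (it satisfies the independence axioms). -/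
open Finset

variable {α β : Type*} [DecidableEq α] [DecidableEq β]

/-- Dilworth truncation independence predicate. -/
def DilIndep (f : α → Finset β) (k : ℕ) (I : Finset α) : Prop :=
  ∀ S ⊆ I, S.Nonempty → S.card + k ≤ (S.sup f).card + 1

lemma dilIndep_empty (f : α → Finset β) (k : ℕ) : DilIndep f k ∅ := by
  intro S hS hne
  simp [Finset.subset_empty.mp hS] at hne

lemma dilIndep_subset {f : α → Finset β} {k : ℕ} {I J : Finset α}
    (hJ : DilIndep f k J) (hIJ : I ⊆ J) : DilIndep f k I :=
  fun S hS hne => hJ S (hS.trans hIJ) hne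

lemma tight_union {f : α → Finset β} {k : ℕ} {I S T : Finset α}
    (hI : DilIndep f k I) (hS : S ⊆ I) (hT : T ⊆ I)
    (hSt : (S.sup f).card + 1 = S.card + k) (hTt : (T.sup f).card + 1 = T.card + k)
    (hST : (S ∩ T).Nonempty) :
    ((S ∪ T).sup f).card + 1 = (S ∪ T).card + k := by
  have h1 := hI (S ∪ T) (union_subset hS hT) (hST.mono (inter_subset_left.trans subset_union_left))
  have h2 := hI (S ∩ T) (inter_subset_left.trans hS) hST
  have hsup : (S ∪ T).sup f = S.sup f ∪ T.sup f := Finset.sup_union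
  have hsub : (S ∩ T).sup f ⊆ S.sup f ∩ T.sup f :=
    subset_inter (sup_mono inter_subset_left) (sup_mono inter_subset_right)
  have hc1 : ((S ∩ T).sup f).card ≤ (S.sup f ∩ T.sup f).card := card_le_card hsub
  have hc2 : (S.sup f ∪ T.sup f).card + (S.sup f ∩ T.sup f).card
      = (S.sup f).card + (T.sup f).card := card_union_add_card_inter _ _
  have hc3 : (S ∪ T).card + (S ∩ T).card = S.card + T.card := card_union_add_card_inter _ _
  rw [hsup] at h1 ⊢
  omega

lemma disjointify {P : Finset α → Prop}
    (hP : ∀ S T, P S → P T → (S ∩ T).Nonempty → P (S ∪ T))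
    (𝒮 : Finset (Finset α)) (h𝒮 : ∀ S ∈ 𝒮, P S) :
    ∃ 𝒯 : Finset (Finset α), (∀ T ∈ 𝒯, P T) ∧
      (∀ T ∈ 𝒯, ∀ T' ∈ 𝒯, T ≠ T' → Disjoint T T') ∧
      (∀ S ∈ 𝒮, ∃ T ∈ 𝒯, S ⊆ T) := by
  generalize hn : 𝒮.card = N
  induction N using Nat.strong_induction_on generalizing 𝒮 with
  | _ N IH =>
    by_cases hdisj : ∀ S ∈ 𝒮, ∀ T ∈ 𝒮, S ≠ T → ¬(S ∩ T).Nonempty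
    · exact ⟨𝒮, h𝒮, fun T hT T' hT' hne => by
        rw [Finset.disjoint_left]
        intro a ha ha'
        exact hdisj T hT T' hT' hne ⟨a, mem_inter.mpr ⟨ha, ha'⟩⟩,
        fun S hS => ⟨S, hS, Finset.Subset.rfl⟩⟩
    · push_neg at hdisj
      obtain ⟨S, hS, T, hT, hne, hint⟩ := hdisj
      have h2le : 2 ≤ 𝒮.card := Finset.one_lt_card.mpr ⟨S, hS, T, hT, hne⟩
      set 𝒮' := insert (S ∪ T) ((𝒮.erase S).erase T) with h𝒮'def
      have hcard : 𝒮'.card < N := by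
        rw [h𝒮'def]
        have he1 : ((𝒮.erase S).erase T).card = 𝒮.card - 1 - 1 := by
          rw [card_erase_of_mem (mem_erase.mpr ⟨hne.symm, hT⟩), card_erase_of_mem hS]
        have := Finset.card_insert_le (S ∪ T) ((𝒮.erase S).erase T)
        omega
      have h𝒮'P : ∀ S' ∈ 𝒮', P S' := by
        intro S' hS'
        rcases Finset.mem_insert.mp hS' with h | h
        · exact h ▸ hP S T (h𝒮 S hS) (h𝒮 T hT) hint
        · exact h𝒮 S' (Finset.mem_of_mem_erase (Finset.mem_of_mem_erase h))
      obtain ⟨𝒯, h1, h2, h3⟩ := IH 𝒮'.card hcard 𝒮' h𝒮'P rfl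
      refine ⟨𝒯, h1, h2, ?_⟩
      intro S' hS'
      by_cases hS'S : S' = S
      · obtain ⟨T', hT', hsub⟩ := h3 (S ∪ T) (mem_insert_self _ _)
        exact ⟨T', hT', hS'S ▸ subset_union_left.trans hsub⟩
      by_cases hS'T : S' = T
      · obtain ⟨T', hT', hsub⟩ := h3 (S ∪ T) (mem_insert_self _ _)
        exact ⟨T', hT', hS'T ▸ subset_union_right.trans hsub⟩
      · exact h3 S' (mem_insert_of_mem (mem_erase.mpr ⟨hS'T, mem_erase.mpr ⟨hS'S, hS'⟩⟩))

lemma dil_aug {f : α → Finset β} {k : ℕ} (hf : ∀ a, (f a).card = k) {I B : Finset α}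
    (hI : DilIndep f k I) (hB : DilIndep f k B) (hcard : I.card < B.card) :
    ∃ e ∈ B, e ∉ I ∧ DilIndep f k (insert e I) := by
  by_contra hcon
  push_neg at hcon
  -- every element of B is "blocked" by a tight subset of I
  have hstep : ∀ e ∈ B, ∃ S, S ⊆ I ∧ S.Nonempty ∧
      (S.sup f).card + 1 = S.card + k ∧ f e ⊆ S.sup f := by
    intro e he
    by_cases heI : e ∈ I
    · exact ⟨{e}, singleton_subset_iff.mpr heI, singleton_nonempty e,
        by simp [hf e]; omega, by simp⟩
    · have hnd := hcon e he heI
      rw [DilIndep] at hnd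
      push_neg at hnd
      obtain ⟨S, hSsub, hSne, hviol⟩ := hnd
      have heS : e ∈ S := by
        by_contra heS
        have : S ⊆ I := fun a ha => by
          rcases Finset.mem_insert.mp (hSsub ha) with h | h
          · exact absurd (h ▸ ha) heS
          · exact h
        exact absurd (hI S this hSne) (by omega)
      set Se := S.erase e with hSedef
      have hSeI : Se ⊆ I := by
        intro a ha
        have haS : a ∈ S := Finset.erase_subset e S ha
        rcases Finset.mem_insert.mp (hSsub haS) with h | h
        · rw [h] at ha
          exact absurd ha (Finset.notMem_erase e S)
        · exact h
      have hSins : S = insert e Se := (Finset.insert_erase heS).symm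
      rcases Se.eq_empty_or_nonempty with hSe | hSene
      · have hSsing : S = {e} := by rw [hSins, hSe]; rfl
        rw [hSsing] at hviol
        simp [hf e] at hviol
        omega
      have hIS := hI Se hSeI hSene
      have hScard : S.card = Se.card + 1 := by
        rw [hSins, card_insert_of_notMem (Finset.notMem_erase e S)]
      have hsupsub : Se.sup f ⊆ S.sup f := sup_mono (erase_subset e S)
      have hsupeq : S.sup f = Se.sup f := by
        refine (Finset.eq_of_subset_of_card_le hsupsub ?_).symm
        have := card_le_card hsupsub
        omega
      have hfe : f e ⊆ Se.sup f := by
        rw [← hsupeq]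
        exact Finset.le_sup (f := f) (hSins ▸ mem_insert_self e Se)
      refine ⟨Se, hSeI, hSene, ?_, hfe⟩
      rw [hsupeq] at hviol
      omega
  choose! S hS1 hS2 hS3 hS4 using hstep
  have hP : ∀ S' T', (S' ⊆ I ∧ S'.Nonempty ∧ (S'.sup f).card + 1 = S'.card + k) →
      (T' ⊆ I ∧ T'.Nonempty ∧ (T'.sup f).card + 1 = T'.card + k) →
      (S' ∩ T').Nonempty →
      ((S' ∪ T') ⊆ I ∧ (S' ∪ T').Nonempty ∧ ((S' ∪ T').sup f).card + 1 = (S' ∪ T').card + k) :=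
    fun S' T' hS' hT' hint =>
      ⟨union_subset hS'.1 hT'.1, hS'.2.1.mono subset_union_left,
        tight_union hI hS'.1 hT'.1 hS'.2.2 hT'.2.2 hint⟩
  obtain ⟨𝒯, h1, h2, h3⟩ := disjointify hP (B.image S) (by
    intro S' hS'
    obtain ⟨e, he, rfl⟩ := Finset.mem_image.mp hS'
    exact ⟨hS1 e he, hS2 e he, hS3 e he⟩)
  have hcover : ∀ e ∈ B, ∃ T ∈ 𝒯, S e ⊆ T := fun e he => h3 (S e) (mem_image_of_mem S he)
  choose! g hg1 hg2 using hcover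
  have hsum : B.card = ∑ T ∈ 𝒯, (B.filter (fun e => g e = T)).card :=
    Finset.card_eq_sum_card_fiberwise hg1
  have hfib : ∀ T ∈ 𝒯, (B.filter (fun e => g e = T)).card ≤ T.card := by
    intro T hT
    set BT := B.filter (fun e => g e = T) with hBTdef
    rcases BT.eq_empty_or_nonempty with h | hne
    · simp [h]
    have hBind := hB BT (filter_subset _ _) hne
    have hsupsub : BT.sup f ≤ T.sup f := by
      apply Finset.sup_le
      intro e heBT
      have heB : e ∈ B := (filter_subset _ _) heBT
      have hge : g e = T := (Finset.mem_filter.mp heBT).2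
      exact (hS4 e heB).trans ((sup_mono (hge ▸ hg2 e heB)))
    have : (BT.sup f).card ≤ (T.sup f).card := card_le_card hsupsub
    have hTt := (h1 T hT).2.2
    omega
  have hsumle : ∑ T ∈ 𝒯, (B.filter (fun e => g e = T)).card ≤ ∑ T ∈ 𝒯, T.card :=
    Finset.sum_le_sum hfib
  have hdisjsum : ∑ T ∈ 𝒯, T.card = (𝒯.biUnion id).card :=
    (Finset.card_biUnion (fun x hx y hy hxy => h2 x hx y hy hxy)).symm
  have hsub : 𝒯.biUnion id ⊆ I := by
    intro a ha
    obtain ⟨T, hT, haT⟩ := Finset.mem_biUnion.mp ha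
    exact (h1 T hT).1 haT
  have := card_le_card hsub
  omega

/-- the rank-`k` flats of the free matroid `U_{n,n}` are exactly the
`k`-element subsets of `[n]` (in the free matroid the rank of a set is its cardinality
and every set is a flat), and the `k`-th Dilworth truncation is indeed a matroid on the
ground set of `k`-element subsets, with the prescribed independent sets: a family is
independent iff every nonempty `s`-element subfamily has union of cardinality at least
`s + k - 1`. -/
theorem dilworth_truncation_is_matroid (n k : ℕ) (hk : 1 ≤ k) (hkn : k ≤ n) :
    (∀ F : Set (Fin n),
      ((Matroid.freeOn (Set.univ : Set (Fin n))).IsFlat F ∧ F.ncard = k) ↔ F.ncard = k) ∧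
    ∃ M : Matroid {J : Finset (Fin n) // J.card = k},
      M.E = Set.univ ∧
      ∀ I : Set {J : Finset (Fin n) // J.card = k},
        M.Indep I ↔
          ∀ G : Finset {J : Finset (Fin n) // J.card = k},
            ↑G ⊆ I → G.Nonempty →
              G.card + k ≤ (G.sup (fun j => (j : Finset (Fin n)))).card + 1 := by
  constructor
  · intro F
    refine ⟨fun h => h.2, fun h => ⟨?_, h⟩⟩
    refine ⟨fun I X hIF hIX => ?_, by simp⟩
    rw [Matroid.freeOn_isBasis_iff] at hIF hIX
    rw [← hIX.1, hIF.1]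
  · set f : {J : Finset (Fin n) // J.card = k} → Finset (Fin n) := fun j => (j : Finset (Fin n))
      with hfdef
    have hf : ∀ j, (f j).card = k := fun j => j.2
    refine ⟨(IndepMatroid.ofFinset Set.univ (DilIndep f k) (dilIndep_empty f k)
      (fun _ _ hJ hIJ => dilIndep_subset hJ hIJ)
      (fun _ _ hI hJ hc => dil_aug hf hI hJ hc)
      (fun _ _ => Set.subset_univ _)).matroid, by simp, ?_⟩
    intro I
    rw [IndepMatroid.matroid_indep_iff, IndepMatroid.ofFinset_indep']
    constructor
    · intro h G hGI hGne
      exact h G hGI G Finset.Subset.rfl hGne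
    · intro h G hGI S hSG hSne
      exact h S ((Finset.coe_subset.mpr hSG).trans hGI) hSne
end

section
/- Let $p \in \mathbb{T}^{\binom{[n]}{m}}$ (where $\mathbb{T} = \mathbb{R} \cup \{-\infty\}$) be the coordinatewise valuation of the Plücker vector of an $m$-dimensional subspace $W$ of $K^n$, where $K$ is a valued field. Then $p$ satisfies the tropical Plücker relations: for every $A \in \binom{[n]}{m-1}$ and $B \in \binom{[n]}{m+1}$, the maximum $\max_{i \in B \setminus A}(p_{A\cup i} + p_{B\setminus i})$ is attained at least twice, or equals $-\infty$. -/
open Matrix Finset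

theorem Valuation.eq_zero_or_max_attained_twice_of_sum_eq_zero {K Γ₀ ι : Type*} [Field K]
    [LinearOrderedCommGroupWithZero Γ₀] [DecidableEq ι] (v : Valuation K Γ₀)
    (S : Finset ι) (f : ι → K) (hsum : ∑ i ∈ S, f i = 0) :
    (∀ i ∈ S, v (f i) = 0) ∨
      ∃ i ∈ S, ∃ j ∈ S, i ≠ j ∧ v (f i) = v (f j) ∧ ∀ l ∈ S, v (f l) ≤ v (f i) := by
  by_cases hzero : ∀ i ∈ S, v (f i) = 0
  · exact Or.inl hzero
  obtain ⟨s, hs, hvs⟩ : ∃ s ∈ S, v (f s) ≠ 0 := by simpa using hzero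
  obtain ⟨i, hi, hmax⟩ := S.exists_max_image (fun i => v (f i)) ⟨s, hs⟩
  have hvi : v (f i) ≠ 0 := fun h => hvs (le_antisymm (h ▸ hmax s hs) zero_le)
  obtain ⟨j, hj, hle⟩ : ∃ j ∈ S \ {i}, v (f i) ≤ v (f j) := by
    by_contra! hlt
    exact hvi (by rw [← v.map_sum_eq_of_lt hi hlt, hsum, v.map_zero])
  obtain ⟨hjS, hji⟩ := mem_sdiff.mp hj
  exact Or.inr ⟨i, hi, j, hjS, fun h => hji (mem_singleton.mpr h.symm),
    le_antisymm hle (hmax j hjS), hmax⟩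

theorem Valuation.map_intCast_units {R Γ₀ : Type*} [Ring R] [LinearOrderedCommGroupWithZero Γ₀]
    (v : Valuation R Γ₀) (u : ℤˣ) : v ((u : ℤ) : R) = 1 := by
  rcases Int.units_eq_one_or u with rfl | rfl <;> simp

theorem Matrix.exists_det_submatrix_snoc_eq_sum {R : Type*} [CommRing R] {k n : ℕ}
    (M : Matrix (Fin (k + 1)) (Fin n) R) (a : Fin k → Fin n) :
    ∃ c : Fin (k + 1) → R, ∀ x, (M.submatrix id (Fin.snoc a x)).det = ∑ i, c i * M i x := by
  refine ⟨fun i => (-1) ^ (i + k : ℕ) * (M.submatrix i.succAbove a).det, fun x => ?_⟩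
  rw [det_succ_column _ (Fin.last k)]
  refine sum_congr rfl fun i _ => ?_
  simp only [submatrix_apply, id, Fin.snoc_last, Fin.val_last, Fin.succAbove_last]
  have : (M.submatrix id (Fin.snoc a x)).submatrix i.succAbove Fin.castSucc =
      M.submatrix i.succAbove a := by
    ext p q; simp
  rw [this]; ring

theorem Matrix.sum_det_submatrix_snoc_mul_det_submatrix_succAbove {R : Type*} [CommRing R]
    {k n : ℕ} (M : Matrix (Fin (k + 1)) (Fin n) R) (a : Fin k → Fin n)
    (b : Fin (k + 2) → Fin n) :
    ∑ j : Fin (k + 2), (-1) ^ (k + 1 + j : ℕ) * (M.submatrix id (Fin.snoc a (b j))).det *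
      (M.submatrix id (b ∘ j.succAbove)).det = 0 := by
  obtain ⟨c, hc⟩ := M.exists_det_submatrix_snoc_eq_sum a
  let N : Matrix (Fin (k + 2)) (Fin (k + 2)) R :=
    of (Fin.snoc (fun i j => M i (b j)) fun j => (M.submatrix id (Fin.snoc a (b j))).det)
  have hlast : N (Fin.last (k + 1)) = ∑ i, (Fin.snoc c 0 : Fin (k + 2) → R) i • N i := by
    ext j
    simp [N, Fin.sum_univ_castSucc, hc, Finset.sum_apply]
  have hN : N.det = 0 := by
    rw [← updateRow_eq_self N (Fin.last _), hlast, det_updateRow_sum]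
    simp
  rw [det_succ_row N (Fin.last _)] at hN
  rw [← hN]
  refine sum_congr rfl fun j _ => ?_
  congr 2
  · simp [N]
  · ext p q; simp [N, Fin.succAbove_last]

theorem exists_det_submatrix_eq_units_mul_minor {K : Type*} [Field K] {m n : ℕ}
    (M : Matrix (Fin m) (Fin n) K) (f : Fin m → Fin n) :
    ∃ u : ℤˣ, (M.submatrix id f).det = u * minor M (univ.image f) := by
  by_cases hf : Function.Injective f
  · have hcard : #(univ.image f) = m := by simp [card_image_of_injective _ hf]
    set e := (univ.image f).orderIsoOfFin hcard
    let σ : Equiv.Perm (Fin m) := Equiv.ofBijective (fun k => e.symm ⟨f k, by simp⟩)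
      (Finite.injective_iff_bijective.mp fun k l hkl => hf (by simpa using hkl))
    have hfσ : f = (fun k => (e k : Fin n)) ∘ σ := by ext k; simp [σ]
    refine ⟨Equiv.Perm.sign σ, ?_⟩
    rw [minor, dif_pos hcard, ← det_permute', submatrix_submatrix, ← hfσ]
    rfl
  · obtain ⟨i, j, hfij, hij⟩ : ∃ i j, f i = f j ∧ i ≠ j := by
      simpa [Function.Injective] using hf
    have hcard : #(univ.image f) ≠ m := by
      simpa using (card_image_iff (s := univ) (f := f)).not.mpr (by simpa using hf)
    refine ⟨1, ?_⟩
    rw [minor, dif_neg hcard, det_zero_of_column_eq hij fun k => by simp [hfij], mul_zero]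

theorem exists_units_sum_mul_minor_mul_minor_eq_zero {K : Type*} [Field K] {k n : ℕ}
    (M : Matrix (Fin (k + 1)) (Fin n) K) (A B : Finset (Fin n)) (hA : #A = k)
    (hB : #B = k + 2) :
    ∃ ε : Fin n → ℤˣ, ∑ i ∈ B, (ε i : K) * (minor M (insert i A) * minor M (B.erase i)) = 0 := by
  set a := A.orderEmbOfFin hA
  set b := B.orderEmbOfFin hB
  have hsum_B (g : Fin n → K) : ∑ i ∈ B, g i = ∑ j, g (b j) := by
    rw [← sum_image (f := g) fun x _ y _ h => b.injective h, image_orderEmbOfFin_univ]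
  have himage_snoc (x : Fin n) :
      univ.image (Fin.snoc a x : Fin (k + 1) → Fin n) = insert x A := by
    apply coe_injective
    simp [a, Fin.range_snoc]
  have himage_succAbove (j : Fin (k + 2)) : univ.image (b ∘ j.succAbove) = B.erase (b j) := by
    rw [← image_image, Fin.image_succAbove_univ, compl_eq_univ_sdiff, sdiff_singleton_eq_erase,
      image_erase b.injective, image_orderEmbOfFin_univ]
  choose u hu using fun x => exists_det_submatrix_eq_units_mul_minor M (Fin.snoc a x)
  choose w hw using fun j : Fin (k + 2) =>
    exists_det_submatrix_eq_units_mul_minor M (b ∘ j.succAbove)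
  refine ⟨Function.extend b (fun j => (-1) ^ (k + 1 + j : ℕ) * u (b j) * w j) 1, ?_⟩
  rw [hsum_B, ← M.sum_det_submatrix_snoc_mul_det_submatrix_succAbove a b]
  refine sum_congr rfl fun j _ => ?_
  rw [b.injective.extend_apply, hu, hw, himage_snoc, himage_succAbove]
  push_cast
  ring

/-- Multiplicative notation: the tropical `-∞` is the valuation value `0`, and `+` of
tropical numbers is `*` of valuation values. -/
theorem tropical_plucker_relations_general
    (K : Type*) [Field K] (Γ₀ : Type*) [LinearOrderedCommGroupWithZero Γ₀]
    (v : Valuation K Γ₀) (m n : ℕ)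
    (M : Matrix (Fin m) (Fin n) K)
    (A B : Finset (Fin n)) (hA : A.card + 1 = m) (hB : B.card = m + 1) :
    (∀ i ∈ B \ A, v (minor M (insert i A)) * v (minor M (B.erase i)) = 0) ∨
    ∃ i ∈ B \ A, ∃ j ∈ B \ A, i ≠ j ∧
      v (minor M (insert i A)) * v (minor M (B.erase i)) =
        v (minor M (insert j A)) * v (minor M (B.erase j)) ∧
      ∀ l ∈ B \ A, v (minor M (insert l A)) * v (minor M (B.erase l)) ≤
        v (minor M (insert i A)) * v (minor M (B.erase i)) := by
  obtain ⟨k, rfl⟩ : ∃ k, m = k + 1 := ⟨A.card, hA.symm⟩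
  obtain ⟨ε, hε⟩ := exists_units_sum_mul_minor_mul_minor_eq_zero M A B (by omega) hB
  have hsum : ∑ i ∈ B \ A, (ε i : K) * (minor M (insert i A) * minor M (B.erase i)) = 0 := by
    rw [sum_subset sdiff_subset, hε]
    intro i hiB hiBA
    have hiA : i ∈ A := by simpa [hiB] using hiBA
    rw [insert_eq_of_mem hiA, minor, dif_neg (by omega), zero_mul, mul_zero]
  simpa [v.map_intCast_units] using v.eq_zero_or_max_attained_twice_of_sum_eq_zero _ _ hsum

/-- the coordinatewise valuation of the Plücker vector of an
`m`-dimensional subspace (given as the rowspace of the rank-`m` matrix `M`) satisfies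
the tropical Plücker relations: for all `A` of size `m-1` and `B` of size `m+1`, the
maximum of the values `v(P_{A∪i}) · v(P_{B∖i})` over `i ∈ B \ A` is attained at least
twice, or all terms are `0` (multiplicative notation: the tropical `-∞` is the
valuation value `0`, and `+` of tropical numbers is `*` of valuation values). -/
theorem tropical_plucker_relations
    (K : Type*) [Field K] (Γ₀ : Type*) [LinearOrderedCommGroupWithZero Γ₀]
    (v : Valuation K Γ₀) (m n : ℕ) (hm : m ≤ n)
    (M : Matrix (Fin m) (Fin n) K) (hM : M.rank = m)
    (A B : Finset (Fin n)) (hA : A.card + 1 = m) (hB : B.card = m + 1) :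
    (∀ i ∈ B \ A, v (minor M (insert i A)) * v (minor M (B.erase i)) = 0) ∨
    ∃ i ∈ B \ A, ∃ j ∈ B \ A, i ≠ j ∧
      v (minor M (insert i A)) * v (minor M (B.erase i)) =
        v (minor M (insert j A)) * v (minor M (B.erase j)) ∧
      ∀ l ∈ B \ A, v (minor M (insert l A)) * v (minor M (B.erase l)) ≤
        v (minor M (insert i A)) * v (minor M (B.erase i)) :=
  tropical_plucker_relations_general K Γ₀ v m n M A B hA hB
end
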